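/- arXiv:2310.07098 — 2 statements merged into one kernel-verified Lean document; each statement's English description precedes it below -/
import Mathlib

section
/- Let ũ be an ℝ^L-valued random vector and X a product line (x₁,…,x_M), each x_m ∈ {0,1}^L with exactly one 1 per block of a partition into A blocks. Suppose each customer's polyhedral uncertainty set U_n has diameter at most d and contains the true utility, and suppose that for every product line X the map t ↦ P(max_m ũᵀx_m ≥ t) is Lipschitz in t with constant θ. Then for every product line X, |P(min_{u∈B(ũ,d)} max_m uᵀx_m ≥ 0) − P(max_m ũᵀx_m ≥ 0)| ≤ θ√A·d, where B(ũ,d) is the Euclidean ball of radius d around ũ. -/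
open MeasureTheory

theorem robust_share_close_to_true_share (L M A : ℕ) (hM : 0 < M)
    {Ω : Type*} [MeasurableSpace Ω] (μ : Measure Ω) [IsProbabilityMeasure μ]
    (utld : Ω → EuclideanSpace ℝ (Fin L))
    (𝓛 : Fin A → Finset (Fin L))
    (hdisj : ∀ a b, a ≠ b → Disjoint (𝓛 a) (𝓛 b))
    (hcover : ∀ l : Fin L, ∃ a, l ∈ 𝓛 a)
    (x : Fin M → Fin L → ℝ)
    (hbin : ∀ m l, x m l = 0 ∨ x m l = 1)
    (hone : ∀ m a, ∑ l ∈ 𝓛 a, x m l = 1)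
    (d θ : ℝ) (hd : 0 ≤ d) (hθ : 0 ≤ θ)
    (hLip : ∀ s t : ℝ,
      |(μ {ω | s ≤ Finset.univ.sup' (Finset.univ_nonempty_iff.mpr ⟨⟨0, hM⟩⟩)
              (fun m => ∑ l, utld ω l * x m l)}).toReal -
        (μ {ω | t ≤ Finset.univ.sup' (Finset.univ_nonempty_iff.mpr ⟨⟨0, hM⟩⟩)
              (fun m => ∑ l, utld ω l * x m l)}).toReal| ≤ θ * |s - t|) :
    |(μ {ω | ∀ v : EuclideanSpace ℝ (Fin L), ‖v - utld ω‖ ≤ d →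
          0 ≤ Finset.univ.sup' (Finset.univ_nonempty_iff.mpr ⟨⟨0, hM⟩⟩)
                (fun m => ∑ l, v l * x m l)}).toReal -
      (μ {ω | 0 ≤ Finset.univ.sup' (Finset.univ_nonempty_iff.mpr ⟨⟨0, hM⟩⟩)
                (fun m => ∑ l, utld ω l * x m l)}).toReal| ≤ θ * Real.sqrt A * d := by
  have hne : (Finset.univ : Finset (Fin M)).Nonempty := Finset.univ_nonempty_iff.mpr ⟨⟨0, hM⟩⟩
  set F : Ω → ℝ := fun ω => Finset.univ.sup' hne (fun m => ∑ l, utld ω l * x m l) with hF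
  set s : ℝ := Real.sqrt A * d with hs
  have hsnn : 0 ≤ s := mul_nonneg (Real.sqrt_nonneg _) hd
  -- ∑ x^2 = A
  have hunivL : (Finset.univ : Finset (Fin L)) = Finset.univ.biUnion 𝓛 := by
    ext l
    simp only [Finset.mem_univ, Finset.mem_biUnion, true_iff]
    obtain ⟨a, ha⟩ := hcover l
    exact ⟨a, trivial, ha⟩
  have hA : ∀ m, ∑ l, (x m l)^2 = (A : ℝ) := by
    intro m
    have h1 : ∀ l, (x m l)^2 = x m l := by
      intro l; rcases hbin m l with h | h <;> rw [h] <;> ring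
    simp only [h1]
    rw [hunivL, Finset.sum_biUnion]
    · simp [hone]
    · intro a _ b _ hab; exact hdisj a b hab
  -- key inclusion
  set E : Set Ω := {ω | ∀ v : EuclideanSpace ℝ (Fin L), ‖v - utld ω‖ ≤ d →
          0 ≤ Finset.univ.sup' hne (fun m => ∑ l, v l * x m l)} with hE
  have hSE : {ω | s ≤ F ω} ⊆ E := by
    intro ω hω v hv
    obtain ⟨m, _, hm⟩ := Finset.exists_mem_eq_sup' hne (fun m => ∑ l, utld ω l * x m l)
    have hFm : F ω = ∑ l, utld ω l * x m l := hm
    have hcs : |∑ l, (v l - utld ω l) * x m l| ≤ ‖v - utld ω‖ * Real.sqrt A := by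
      have h2 := Finset.sum_mul_sq_le_sq_mul_sq Finset.univ (fun l => v l - utld ω l) (x m)
      have hnorm : ‖v - utld ω‖ = Real.sqrt (∑ l, (v l - utld ω l)^2) := by
        rw [EuclideanSpace.norm_eq]
        congr 1
        refine Finset.sum_congr rfl fun l _ => ?_
        simp [Real.norm_eq_abs, sq_abs]
      calc |∑ l, (v l - utld ω l) * x m l|
          = Real.sqrt ((∑ l, (v l - utld ω l) * x m l)^2) := (Real.sqrt_sq_eq_abs _).symm
        _ ≤ Real.sqrt ((∑ l, (v l - utld ω l)^2) * ∑ l, (x m l)^2) := Real.sqrt_le_sqrt h2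
        _ = Real.sqrt (∑ l, (v l - utld ω l)^2) * Real.sqrt (∑ l, (x m l)^2) := by
            rw [Real.sqrt_mul (Finset.sum_nonneg fun l _ => sq_nonneg _)]
        _ = ‖v - utld ω‖ * Real.sqrt A := by rw [hnorm, hA m]
    have hlow : -(d * Real.sqrt A) ≤ ∑ l, (v l - utld ω l) * x m l := by
      have := neg_abs_le (∑ l, (v l - utld ω l) * x m l)
      have h3 : ‖v - utld ω‖ * Real.sqrt A ≤ d * Real.sqrt A :=
        mul_le_mul_of_nonneg_right hv (Real.sqrt_nonneg _)
      linarith [hcs]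
    have hsplit : ∑ l, v l * x m l = (∑ l, utld ω l * x m l) + ∑ l, (v l - utld ω l) * x m l := by
      rw [← Finset.sum_add_distrib]; refine Finset.sum_congr rfl fun l _ => by ring
    have h0 : 0 ≤ ∑ l, v l * x m l := by
      have hsF : s ≤ F ω := hω
      rw [hsplit, ← hFm]
      have : s = Real.sqrt A * d := hs
      nlinarith [hlow, hsF]
    exact le_trans h0 (Finset.le_sup' (fun m => ∑ l, v l * x m l) (Finset.mem_univ m))
  have hET : E ⊆ {ω | 0 ≤ F ω} := by
    intro ω hω
    exact hω (utld ω) (by simp [hd])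
  have hST : {ω | s ≤ F ω} ⊆ {ω | 0 ≤ F ω} := fun ω hω => le_trans hsnn hω
  -- measure arithmetic
  have hfin : ∀ (S : Set Ω), (μ S) ≠ ⊤ := fun S => measure_ne_top μ S
  have h1 : (μ {ω | s ≤ F ω}).toReal ≤ (μ E).toReal :=
    ENNReal.toReal_mono (hfin _) (measure_mono hSE)
  have h2 : (μ E).toReal ≤ (μ {ω | 0 ≤ F ω}).toReal :=
    ENNReal.toReal_mono (hfin _) (measure_mono hET)
  have hL := hLip s 0
  rw [sub_zero, abs_of_nonneg hsnn] at hL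
  have h3 : (μ {ω | s ≤ F ω}).toReal ≤ (μ {ω | 0 ≤ F ω}).toReal :=
    ENNReal.toReal_mono (hfin _) (measure_mono hST)
  rw [abs_of_nonpos (by linarith)] at hL ⊢
  calc -((μ E).toReal - (μ {ω | 0 ≤ F ω}).toReal)
      ≤ -((μ {ω | s ≤ F ω}).toReal - (μ {ω | 0 ≤ F ω}).toReal) := by linarith
    _ ≤ θ * s := hL
    _ = θ * Real.sqrt A * d := by rw [hs]; ring
end

section
/- Under the same setting, let x^N ∈ argmax_{x∈𝒳} (1/N)∑_{n=1}^N 1{û_nᵀx ≥ 0} be the sample-optimal product and x* ∈ argmax_{x∈𝒳} P(ũᵀx ≥ 0) the true-optimal product. Then for any ε > 0 and δ ∈ (0,1), if N ≥ (2e²(K+2)·log 2/ε²)·log(2/δ), with probability at least 1 − δ it holds that P(ũᵀx* ≥ 0) − P(ũᵀx^N ≥ 0) ≤ 2ε. -/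
open MeasureTheory ProbabilityTheory Real Finset
open scoped NNReal

/-!
By Hoeffding's inequality, for each product `x` the empirical share of choice deviates from the
true share by at least `ε` with probability at most `2 exp (-2 N ε²)`. A union bound over the at
most `2 ^ K` products and the sample-size condition push the total failure probability below `δ`.
Off that event, `x^N` beats `x*` empirically, so the true shares differ by less than `2 ε`.
-/

namespace ProbabilityTheory

variable {Ω : Type*} {m : MeasurableSpace Ω} {μ : Measure Ω}

lemma HasSubgaussianMGF.measure_abs_ge_le {X : Ω → ℝ} {c : ℝ≥0}
    (h : HasSubgaussianMGF X c μ) {ε : ℝ} (hε : 0 ≤ ε) :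
    μ.real {ω | ε ≤ |X ω|} ≤ 2 * exp (-ε ^ 2 / (2 * c)) := by
  have h_split : {ω | ε ≤ |X ω|} = {ω | ε ≤ X ω} ∪ {ω | ε ≤ (-X) ω} := by
    ext ω
    simp only [Set.mem_ofPred_eq, Set.mem_union, Pi.neg_apply, le_abs', le_neg, or_comm]
  calc μ.real {ω | ε ≤ |X ω|}
      ≤ μ.real {ω | ε ≤ X ω} + μ.real {ω | ε ≤ (-X) ω} := h_split ▸ measureReal_union_le _ _
    _ ≤ 2 * exp (-ε ^ 2 / (2 * c)) := by
      linarith [h.measure_ge_le hε, h.neg.measure_ge_le hε]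

lemma measure_abs_sum_sub_integral_ge_le [IsProbabilityMeasure μ] {ι : Type*}
    {X : ι → Ω → ℝ} (h_indep : iIndepFun X μ) (hm : ∀ i, AEMeasurable (X i) μ) {a b : ℝ}
    (hb : ∀ i, ∀ᵐ ω ∂μ, X i ω ∈ Set.Icc a b) (s : Finset ι) {t : ℝ} (ht : 0 ≤ t) :
    μ.real {ω | t ≤ |∑ i ∈ s, (X i ω - μ[X i])|} ≤
      2 * exp (-2 * t ^ 2 / (#s * (b - a) ^ 2)) := by
  have h_indep' : iIndepFun (fun i ↦ (· - μ[X i]) ∘ X i) μ :=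
    h_indep.comp _ (fun _ ↦ measurable_id.sub_const _)
  have h_sum := HasSubgaussianMGF.sum_of_iIndepFun h_indep' (s := s)
    (fun i _ ↦ hasSubgaussianMGF_of_mem_Icc (hm i) (hb i))
  refine (h_sum.measure_abs_ge_le ht).trans_eq ?_
  congr 2
  push_cast
  rw [sum_const, nsmul_eq_mul, Real.norm_eq_abs, div_pow, sq_abs,
    show 2 * (#s * ((b - a) ^ 2 / 2 ^ 2)) = #s * (b - a) ^ 2 / 2 by ring, div_div_eq_mul_div]
  ring

variable {E : Type*} [MeasurableSpace E] {Z : Ω → E}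

lemma IdentDistrib.integral_indicator_one_comp {Ω' : Type*} {m' : MeasurableSpace Ω'}
    {ν : Measure Ω'} {Y : Ω' → E} (hY : IdentDistrib Y Z ν μ) {S : Set E}
    (hS : MeasurableSet S) :
    ν[S.indicator 1 ∘ Y] = μ.real (Z ⁻¹' S) := by
  calc ν[S.indicator 1 ∘ Y] = ν[(Y ⁻¹' S).indicator 1] := rfl
    _ = ν.real (Y ⁻¹' S) := by
      rw [integral_indicator₀ (hY.aemeasurable_fst.nullMeasurableSet_preimage hS), Pi.one_def,
        setIntegral_const, smul_eq_mul, mul_one]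
    _ = μ.real (Z ⁻¹' S) := by rw [measureReal_def, hY.measure_mem_eq hS, measureReal_def]

variable [IsProbabilityMeasure μ] {N : ℕ} {Y : Fin N → Ω → E}

lemma measure_abs_sum_indicator_sub_ge_le (h_indep : iIndepFun Y μ)
    (hid : ∀ n, IdentDistrib (Y n) Z μ μ) {S : Set E} (hS : MeasurableSet S) {ε : ℝ}
    (hε : 0 ≤ ε) :
    μ.real {ω | N * ε ≤ |∑ n, S.indicator 1 (Y n ω) - N * μ.real (Z ⁻¹' S)|} ≤
      2 * exp (-2 * N * ε ^ 2) := by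
  have h_indep' : iIndepFun (fun n ↦ S.indicator (1 : E → ℝ) ∘ Y n) μ :=
    h_indep.comp _ (fun _ ↦ measurable_const.indicator hS)
  have h_mem : ∀ n, ∀ᵐ ω ∂μ, (S.indicator (1 : E → ℝ) ∘ Y n) ω ∈ Set.Icc 0 1 :=
    fun n ↦ ae_of_all _ fun ω ↦ by by_cases h : Y n ω ∈ S <;> simp [h]
  have h_hoeffding := measure_abs_sum_sub_integral_ge_le h_indep'
    (fun n ↦ (measurable_const.indicator hS).comp_aemeasurable (hid n).aemeasurable_fst)
    h_mem univ (t := N * ε) (by positivity)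
  simp only [fun n ↦ (hid n).integral_indicator_one_comp hS, sum_sub_distrib, sum_const,
    card_univ, Fintype.card_fin, nsmul_eq_mul, sub_zero, one_pow, mul_one] at h_hoeffding
  refine h_hoeffding.trans_eq ?_
  rcases eq_or_ne (N : ℝ) 0 with hN | hN
  · simp [hN]
  · field_simp

lemma measure_exists_abs_sum_indicator_sub_ge_le (h_indep : iIndepFun Y μ)
    (hid : ∀ n, IdentDistrib (Y n) Z μ μ) {α : Type*} (A : Finset α) {S : α → Set E}
    (hS : ∀ a ∈ A, MeasurableSet (S a)) {ε : ℝ} (hε : 0 ≤ ε) :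
    μ.real {ω | ∃ a ∈ A, N * ε ≤ |∑ n, (S a).indicator 1 (Y n ω) - N * μ.real (Z ⁻¹' S a)|} ≤
      #A * (2 * exp (-2 * N * ε ^ 2)) := by
  calc _ = μ.real (⋃ a ∈ A,
        {ω | N * ε ≤ |∑ n, (S a).indicator 1 (Y n ω) - N * μ.real (Z ⁻¹' S a)|}) := by
        congr 1; ext; simp
    _ ≤ ∑ a ∈ A, μ.real
        {ω | N * ε ≤ |∑ n, (S a).indicator 1 (Y n ω) - N * μ.real (Z ⁻¹' S a)|} :=
      measureReal_biUnion_finset_le _ _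
    _ ≤ ∑ _a ∈ A, 2 * exp (-2 * N * ε ^ 2) :=
      sum_le_sum fun a ha ↦ measure_abs_sum_indicator_sub_ge_le h_indep hid (hS a ha) hε
    _ = #A * (2 * exp (-2 * N * ε ^ 2)) := by rw [sum_const, nsmul_eq_mul]

end ProbabilityTheory

lemma sub_lt_two_mul_of_abs_sub_mul_lt {N e e' p p' ε : ℝ} (hN : 0 < N)
    (h : |e - N * p| < N * ε) (h' : |e' - N * p'| < N * ε) (hle : e ≤ e') :
    p - p' < 2 * ε := by
  have := abs_lt.1 h
  have := abs_lt.1 h'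
  exact lt_of_mul_lt_mul_left (by linarith) hN.le

lemma two_pow_mul_two_mul_exp_le {K N : ℕ} {ε δ : ℝ} (hε : 0 < ε) (hδ0 : 0 < δ) (hδ1 : δ < 1)
    (hN : (2 * exp 1 ^ 2 * (K + 2) * log 2 / ε ^ 2) * log (2 / δ) ≤ N) :
    2 ^ K * (2 * exp (-2 * N * ε ^ 2)) ≤ δ := by
  set A := log (2 / δ)
  have hA : log 2 ≤ A := log_le_log two_pos (by rw [le_div_iff₀ hδ0]; linarith)
  have hlog2 : 1 / 2 < log 2 := by linarith [log_two_gt_d9]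
  have he : 2 ≤ exp 1 := by linarith [add_one_le_exp 1]
  have hNε : 2 * exp 1 ^ 2 * (K + 2) * log 2 * A ≤ N * ε ^ 2 := by
    rwa [div_mul_eq_mul_div, div_le_iff₀ (by positivity)] at hN
  have hK : (K : ℝ) * log 2 ≤ K * A := by gcongr
  have hexp : 2 ≤ exp 1 ^ 2 * log 2 := by nlinarith
  have hKA : 0 ≤ ((K : ℝ) + 2) * A := mul_nonneg (by positivity) (by linarith)
  have h_exponent : K * log 2 + A ≤ 2 * N * ε ^ 2 := by nlinarith [mul_le_mul_of_nonneg_right hexp hKA]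
  calc 2 ^ K * (2 * exp (-2 * N * ε ^ 2)) = 2 ^ (K + 1) * exp (-2 * N * ε ^ 2) := by ring
    _ ≤ 2 ^ (K + 1) * exp (-(K * log 2 + A)) := by gcongr; linarith
    _ = δ := by
      rw [exp_neg, exp_add, exp_nat_mul, exp_log two_pos, exp_log (by positivity)]
      field_simp
      ring

theorem saa_optimality_gap_general (L K N : ℕ) (hN : 0 < N)
    {Ω : Type*} [MeasurableSpace Ω] (μ : Measure Ω) [IsProbabilityMeasure μ]
    (utld : Ω → Fin L → ℝ)
    (uh : Fin N → Ω → Fin L → ℝ)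
    (hind : iIndepFun uh μ)
    (hid : ∀ n, IdentDistrib (uh n) utld μ μ)
    (𝒳 : Finset (Fin L → ℝ)) (hcard : 𝒳.card ≤ 2 ^ K)
    (xN : Ω → Fin L → ℝ)
    (hxN : ∀ ω, xN ω ∈ 𝒳 ∧ ∀ x ∈ 𝒳,
      (∑ n, if 0 ≤ ∑ l, uh n ω l * x l then (1 : ℝ) else 0) / N ≤
        (∑ n, if 0 ≤ ∑ l, uh n ω l * (xN ω) l then (1 : ℝ) else 0) / N)
    (xstar : Fin L → ℝ)
    (hxstar : xstar ∈ 𝒳 ∧ ∀ x ∈ 𝒳,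
      (μ {ω' | 0 ≤ ∑ l, utld ω' l * x l}).toReal ≤
        (μ {ω' | 0 ≤ ∑ l, utld ω' l * xstar l}).toReal)
    (ε δ : ℝ) (hε : 0 < ε) (hδ0 : 0 < δ) (hδ1 : δ < 1)
    (hNbig : (2 * Real.exp 1 ^ 2 * (K + 2) * Real.log 2 / ε ^ 2) * Real.log (2 / δ) ≤ N) :
    1 - δ ≤ (μ {ω |
      (μ {ω' | 0 ≤ ∑ l, utld ω' l * xstar l}).toReal -
        (μ {ω' | 0 ≤ ∑ l, utld ω' l * (xN ω) l}).toReal ≤ 2 * ε}).toReal := by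
  set S : (Fin L → ℝ) → Set (Fin L → ℝ) := fun x ↦ {v | 0 ≤ ∑ l, v l * x l}
  set bad := {ω | ∃ x ∈ 𝒳,
    N * ε ≤ |∑ n, (S x).indicator 1 (uh n ω) - N * μ.real (utld ⁻¹' S x)|}
  set good := {ω | μ.real (utld ⁻¹' S xstar) - μ.real (utld ⁻¹' S (xN ω)) ≤ 2 * ε}
  have h_bad : μ.real bad ≤ δ := calc
    μ.real bad ≤ #𝒳 * (2 * exp (-2 * N * ε ^ 2)) :=
      measure_exists_abs_sum_indicator_sub_ge_le hind hid 𝒳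
        (fun x _ ↦ measurableSet_le measurable_const (by fun_prop)) hε.le
    _ ≤ 2 ^ K * (2 * exp (-2 * N * ε ^ 2)) := by gcongr; exact_mod_cast hcard
    _ ≤ δ := two_pow_mul_two_mul_exp_le hε hδ0 hδ1 hNbig
  have h_cover : good ∪ bad = Set.univ := by
    refine Set.eq_univ_of_forall fun ω ↦ or_iff_not_imp_right.2 fun hω ↦ ?_
    simp only [bad, Set.mem_ofPred_eq, not_exists, not_and, not_le] at hω
    have hNpos : (0 : ℝ) < N := by exact_mod_cast hN
    refine (sub_lt_two_mul_of_abs_sub_mul_lt hNpos (hω _ hxstar.1) (hω _ (hxN ω).1) ?_).le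
    -- `(S x).indicator 1 (uh n ω)` unfolds to the `if` in `hxN`
    exact (div_le_div_iff_of_pos_right hNpos).1 ((hxN ω).2 _ hxstar.1)
  calc 1 - δ ≤ μ.real (good ∪ bad) - μ.real bad := by rw [h_cover, probReal_univ]; linarith
    _ ≤ μ.real good := by linarith [measureReal_union_le (μ := μ) good bad]

theorem saa_optimality_gap (L K N : ℕ) (hN : 0 < N)
    {Ω : Type*} [MeasurableSpace Ω] (μ : Measure Ω) [IsProbabilityMeasure μ]
    (utld : Ω → Fin L → ℝ) (hmeas0 : Measurable utld)
    (uh : Fin N → Ω → Fin L → ℝ) (hmeas : ∀ n, Measurable (uh n))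
    (hind : iIndepFun uh μ)
    (hid : ∀ n, IdentDistrib (uh n) utld μ μ)
    (𝒳 : Finset (Fin L → ℝ)) (hcard : 𝒳.card ≤ 2 ^ K)
    (xN : Ω → Fin L → ℝ)
    (hxN : ∀ ω, xN ω ∈ 𝒳 ∧ ∀ x ∈ 𝒳,
      (∑ n, if 0 ≤ ∑ l, uh n ω l * x l then (1 : ℝ) else 0) / N ≤
        (∑ n, if 0 ≤ ∑ l, uh n ω l * (xN ω) l then (1 : ℝ) else 0) / N)
    (xstar : Fin L → ℝ)
    (hxstar : xstar ∈ 𝒳 ∧ ∀ x ∈ 𝒳,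
      (μ {ω' | 0 ≤ ∑ l, utld ω' l * x l}).toReal ≤
        (μ {ω' | 0 ≤ ∑ l, utld ω' l * xstar l}).toReal)
    (ε δ : ℝ) (hε : 0 < ε) (hδ0 : 0 < δ) (hδ1 : δ < 1)
    (hNbig : (2 * Real.exp 1 ^ 2 * (K + 2) * Real.log 2 / ε ^ 2) * Real.log (2 / δ) ≤ N) :
    1 - δ ≤ (μ {ω |
      (μ {ω' | 0 ≤ ∑ l, utld ω' l * xstar l}).toReal -
        (μ {ω' | 0 ≤ ∑ l, utld ω' l * (xN ω) l}).toReal ≤ 2 * ε}).toReal :=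
  saa_optimality_gap_general L K N hN μ utld uh hind hid 𝒳 hcard xN hxN xstar hxstar ε δ hε hδ0 hδ1
    hNbig
end
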